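/- arXiv:2307.06976 — 5 statements merged into one kernel-verified Lean document; each statement's English description precedes it below -/
import Mathlib

section
/- Let G be a finite simple graph with unanimous thresholds (t(v) = deg(v) for every vertex v). A set S of vertices is a target set (i.e., the activation process starting from S eventually infects all vertices) if and only if S is a vertex cover of G. -/
open scoped Classical
open Finset

/-- One round of the activation (infection) process: every vertex whose number of
already-infected neighbours reaches its threshold becomes infected. -/
noncomputable def infectStep {V : Type*} [Fintype V] (G : SimpleGraph V) (t : V → ℕ)
    (S : Finset V) : Finset V :=
  S ∪ Finset.univ.filter fun v => t v ≤ ((G.neighborFinset v) ∩ S).card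

/-- The set of infected vertices after `i` rounds, starting from `S`. -/
noncomputable def infect {V : Type*} [Fintype V] (G : SimpleGraph V) (t : V → ℕ)
    (S : Finset V) : ℕ → Finset V
  | 0 => S
  | i + 1 => infectStep G t (infect G t S i)

/-- `S` is a target set if the activation process starting from `S` eventually
infects all vertices. -/
def IsTargetSet {V : Type*} [Fintype V] (G : SimpleGraph V) (t : V → ℕ)
    (S : Finset V) : Prop :=
  ∃ i, infect G t S i = Finset.univ

/-!
With threshold `deg v`, a vertex becomes infected exactly when all of its neighbours are
infected. Hence if `S` covers every edge, each vertex outside `S` is infected in the first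
round; and if an edge `uv` has both ends outside `S`, each end keeps an uninfected neighbour
forever, so neither is ever infected.
-/

namespace SimpleGraph

variable {V : Type*} [Fintype V] (G : SimpleGraph V) {S : Finset V}

lemma mem_infectStep_iff {t : V → ℕ} {v : V} :
    v ∈ infectStep G t S ↔ v ∈ S ∨ t v ≤ #(G.neighborFinset v ∩ S) := by
  simp [infectStep]

lemma degree_le_card_neighborFinset_inter_iff {v : V} :
    G.degree v ≤ #(G.neighborFinset v ∩ S) ↔ G.neighborFinset v ⊆ S := by
  rw [← card_neighborFinset_eq_degree, ← inter_eq_left]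
  exact ⟨fun h => eq_of_subset_of_card_le inter_subset_left h, fun h => (congrArg card h).ge⟩

lemma mem_infectStep_degree_iff {v : V} :
    v ∈ infectStep G (fun v => G.degree v) S ↔ v ∈ S ∨ ∀ w, G.Adj v w → w ∈ S := by
  rw [mem_infectStep_iff, degree_le_card_neighborFinset_inter_iff]
  simp only [subset_iff, mem_neighborFinset]

lemma infectStep_degree_eq_univ (hS : G.IsVertexCover S) :
    infectStep G (fun v => G.degree v) S = univ := by
  refine eq_univ_of_forall fun v => (G.mem_infectStep_degree_iff).2 ?_
  by_cases hv : v ∈ S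
  · exact .inl hv
  · exact .inr fun w hvw => (hS hvw).resolve_left hv

lemma notMem_infectStep_degree_of_adj {u v : V} (huv : G.Adj u v) (hu : u ∉ S) (hv : v ∉ S) :
    u ∉ infectStep G (fun v => G.degree v) S := by
  rw [mem_infectStep_degree_iff]
  rintro (hu' | hall)
  · exact hu hu'
  · exact hv (hall v huv)

lemma isVertexCover_of_isVertexCover_infectStep_degree
    (h : G.IsVertexCover (infectStep G (fun v => G.degree v) S : Set V)) :
    G.IsVertexCover S := by
  intro u v huv
  by_contra! huv_out
  rcases h huv with hu | hv
  · exact G.notMem_infectStep_degree_of_adj huv huv_out.1 huv_out.2 hu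
  · exact G.notMem_infectStep_degree_of_adj huv.symm huv_out.2 huv_out.1 hv

lemma isVertexCover_of_isVertexCover_infect_degree {i : ℕ}
    (h : G.IsVertexCover (infect G (fun v => G.degree v) S i : Set V)) : G.IsVertexCover S := by
  induction i with
  | zero => exact h
  | succ i ih => exact ih (G.isVertexCover_of_isVertexCover_infectStep_degree h)

end SimpleGraph

/-- With unanimous thresholds (threshold = degree), a set is a target set
iff it is a vertex cover. -/
theorem tss_unanimous_iff_vertexCover {V : Type*} [Fintype V] (G : SimpleGraph V)
    (S : Finset V) :
    IsTargetSet G (fun v => G.degree v) S ↔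
      ∀ u v : V, G.Adj u v → u ∈ S ∨ v ∈ S := by
  change _ ↔ G.IsVertexCover S
  constructor
  · rintro ⟨i, hi⟩
    apply G.isVertexCover_of_isVertexCover_infect_degree (i := i)
    rw [hi, coe_univ]
    exact G.isVertexCover_univ
  · exact fun hS => ⟨1, G.infectStep_degree_eq_univ hS⟩
end

section
/- Let G be a graph, t a threshold function, S a target set, and v ∈ S a vertex with t(v) ≤ 1 and deg(v) ≥ 1. Then for any neighbor u of v, the set (S \ {v}) ∪ {u} is also a target set. -/
open scoped Classical
open Finset

/-!
After one round from `insert u (S.erase v)` every vertex of `S` is active: `v` has the active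
neighbour `u`, which meets its threshold `t v ≤ 1`. Since the process is monotone, it then
dominates the process started from `S`.
-/

section Activation

variable {V : Type*} [Fintype V] (G : SimpleGraph V) (t : V → ℕ)

lemma mem_infectStep_iff {S : Finset V} {x : V} :
    x ∈ infectStep G t S ↔ x ∈ S ∨ t x ≤ (G.neighborFinset x ∩ S).card := by
  simp [infectStep]

lemma infectStep_mono : Monotone (infectStep G t) := fun _ _ hST =>
  union_subset_union hST fun x hx => by
    simp only [mem_filter, mem_univ, true_and] at hx ⊢
    exact hx.trans (card_le_card (inter_subset_inter_left hST))

lemma infect_mono {S T : Finset V} (hST : S ⊆ T) (i : ℕ) : infect G t S i ⊆ infect G t T i := by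
  induction i with
  | zero => exact hST
  | succ i ih => exact infectStep_mono G t ih

lemma infect_succ' (S : Finset V) (i : ℕ) :
    infect G t S (i + 1) = infect G t (infectStep G t S) i := by
  induction i with
  | zero => rfl
  | succ i ih => exact congrArg (infectStep G t) ih

lemma IsTargetSet.of_subset_infectStep {S T : Finset V} (hS : IsTargetSet G t S)
    (hST : S ⊆ infectStep G t T) : IsTargetSet G t T := by
  obtain ⟨i, hi⟩ := hS
  refine ⟨i + 1, eq_univ_of_forall fun x => ?_⟩
  rw [infect_succ']
  exact infect_mono G t hST i (hi ▸ mem_univ x)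

end Activation

theorem targetSet_swap_leaf_general {V : Type*} [Fintype V] [DecidableEq V]
    (G : SimpleGraph V) (t : V → ℕ) (S : Finset V) (v u : V)
    (hS : IsTargetSet G t S) (htv : t v ≤ 1)
    (hu : G.Adj v u) :
    IsTargetSet G t (insert u (S.erase v)) := by
  refine hS.of_subset_infectStep G t fun x hx => (mem_infectStep_iff G t).2 ?_
  by_cases hxv : x = v
  · subst hxv
    exact Or.inr (htv.trans (card_pos.2 ⟨u, by simp [hu]⟩))
  · exact Or.inl (mem_insert_of_mem (mem_erase.2 ⟨hxv, hx⟩))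

/-- A vertex of threshold at most 1 and positive degree in a target set may be
replaced by any of its neighbours. -/
theorem targetSet_swap_leaf {V : Type*} [Fintype V] [DecidableEq V]
    (G : SimpleGraph V) (t : V → ℕ) (S : Finset V) (v u : V)
    (hS : IsTargetSet G t S) (hv : v ∈ S) (htv : t v ≤ 1)
    (hdeg : 1 ≤ G.degree v) (hu : G.Adj v u) :
    IsTargetSet G t (insert u (S.erase v)) :=
  targetSet_swap_leaf_general G t S v u hS htv hu
end

section
/- Let G' be obtained from a graph G by subdividing one edge e once, creating a new vertex v' with threshold t'(v') = 1, while all other thresholds are unchanged. If S ⊆ V(G) is a target set for G with respect to t, then S is also a target set for G' with respect to t'. -/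
open scoped Classical
open Finset

/-! A vertex infected in round `n` of the process on `G` is infected by round `2 n` on the
subdivided graph `G'`: the new vertex only relays the edge `uw`, and it is infected one round
after `u` or `w`, since its threshold is `1`. -/

section Infection

variable {W : Type*} [Fintype W] (H : SimpleGraph W) (τ : W → ℕ)

theorem mem_infectStep {T : Finset W} {v : W} :
    v ∈ infectStep H τ T ↔ v ∈ T ∨ τ v ≤ (H.neighborFinset v ∩ T).card := by
  simp [infectStep]

theorem subset_infectStep (T : Finset W) : T ⊆ infectStep H τ T :=
  subset_union_left

theorem mem_infectStep_of_adj {T : Finset W} {v x : W} (hτ : τ v ≤ 1) (hx : x ∈ T)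
    (hvx : H.Adj v x) : v ∈ infectStep H τ T :=
  (mem_infectStep H τ).2 <| Or.inr <| hτ.trans <| one_le_card.2
    ⟨x, mem_inter.2 ⟨(H.mem_neighborFinset v x).2 hvx, hx⟩⟩

end Infection

section Subdivision

variable {V : Type*} {G : SimpleGraph V} {G' : SimpleGraph (V ⊕ Unit)} {u w : V}

/-- `G'` is `G` with the edge `uw` subdivided by the new vertex `inr ()`. -/
structure IsSubdivision (G : SimpleGraph V) (G' : SimpleGraph (V ⊕ Unit)) (u w : V) : Prop where
  adj_inl_inl : ∀ a b : V, G'.Adj (Sum.inl a) (Sum.inl b) ↔ (G.Adj a b ∧ s(a, b) ≠ s(u, w))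
  adj_inl_inr : ∀ a : V, G'.Adj (Sum.inl a) (Sum.inr ()) ↔ (a = u ∨ a = w)

/-- The neighbour of `inl y` in the subdivided graph that stands in for the neighbour `z` of
`y` in `G`. -/
noncomputable def subdivNeighbor (u w y z : V) : V ⊕ Unit :=
  if s(y, z) = s(u, w) then Sum.inr () else Sum.inl z

theorem subdivNeighbor_injective (u w y : V) : Function.Injective (subdivNeighbor u w y) := by
  intro z₁ z₂ h
  unfold subdivNeighbor at h
  split_ifs at h with h₁ h₂ h₂
  · exact Sym2.congr_right.1 (h₁.trans h₂.symm)
  · exact Sum.inl.inj h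

theorem IsSubdivision.adj_subdivNeighbor (hG' : IsSubdivision G G' u w) {y z : V}
    (hyz : G.Adj y z) : G'.Adj (Sum.inl y) (subdivNeighbor u w y z) := by
  unfold subdivNeighbor
  split_ifs with h
  · refine (hG'.adj_inl_inr y).2 ?_
    rcases Sym2.eq_iff.1 h with ⟨rfl, -⟩ | ⟨rfl, -⟩ <;> simp
  · exact (hG'.adj_inl_inl y z).2 ⟨hyz, h⟩

variable [Fintype V]

theorem IsSubdivision.inr_mem_infectStep (hG' : IsSubdivision G G' u w) (t : V → ℕ)
    {B : Finset (V ⊕ Unit)} {x : V} (hx : Sum.inl x ∈ B) (hxuw : x = u ∨ x = w) :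
    Sum.inr () ∈ infectStep G' (Sum.elim t fun _ => 1) B :=
  mem_infectStep_of_adj G' _ le_rfl hx ((hG'.adj_inl_inr x).2 hxuw).symm

theorem IsSubdivision.subdivNeighbor_mem_infectStep (hG' : IsSubdivision G G' u w)
    (t : V → ℕ) {B : Finset (V ⊕ Unit)} {y z : V} (hz : Sum.inl z ∈ B) :
    subdivNeighbor u w y z ∈ infectStep G' (Sum.elim t fun _ => 1) B := by
  unfold subdivNeighbor
  split_ifs with h
  · refine hG'.inr_mem_infectStep t hz ?_
    rcases Sym2.eq_iff.1 h with ⟨-, rfl⟩ | ⟨-, rfl⟩ <;> simp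
  · exact subset_infectStep _ _ _ hz

theorem IsSubdivision.inl_mem_infectStep_infectStep (hG' : IsSubdivision G G' u w) (t : V → ℕ)
    {A : Finset V} {B : Finset (V ⊕ Unit)} (hAB : ∀ a ∈ A, Sum.inl a ∈ B) :
    ∀ y ∈ infectStep G t A,
      Sum.inl y ∈
        infectStep G' (Sum.elim t fun _ => 1) (infectStep G' (Sum.elim t fun _ => 1) B) := by
  intro y hy
  rw [mem_infectStep] at hy ⊢
  rcases hy with hy | hy
  · exact Or.inl (subset_infectStep _ _ _ (hAB y hy))
  refine Or.inr (hy.trans (card_le_card_of_injOn (subdivNeighbor u w y) (fun z hz => ?_)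
    (subdivNeighbor_injective u w y).injOn))
  simp only [coe_inter, Set.mem_inter_iff, mem_coe, SimpleGraph.mem_neighborFinset] at hz ⊢
  exact ⟨hG'.adj_subdivNeighbor hz.1, hG'.subdivNeighbor_mem_infectStep t (hAB z hz.2)⟩

theorem IsSubdivision.inl_mem_infect [DecidableEq V] (hG' : IsSubdivision G G' u w)
    (t : V → ℕ) (S : Finset V) (n : ℕ) :
    ∀ a ∈ infect G t S n,
      Sum.inl a ∈ infect G' (Sum.elim t fun _ => 1) (S.image Sum.inl) (2 * n) := by
  induction n with
  | zero => exact fun a ha => mem_image_of_mem _ ha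
  | succ n ih => exact hG'.inl_mem_infectStep_infectStep t ih

theorem IsSubdivision.isTargetSet [DecidableEq V] (hG' : IsSubdivision G G' u w) {t : V → ℕ}
    {S : Finset V} (hS : IsTargetSet G t S) :
    IsTargetSet G' (Sum.elim t fun _ => 1) (S.image Sum.inl) := by
  obtain ⟨n, hn⟩ := hS
  have hV : ∀ x : V, Sum.inl x ∈ infect G' (Sum.elim t fun _ => 1) (S.image Sum.inl) (2 * n) :=
    fun x => hG'.inl_mem_infect t S n x (hn ▸ mem_univ x)
  refine ⟨2 * n + 1, eq_univ_of_forall ?_⟩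
  rintro (x | ⟨⟩)
  · exact subset_infectStep _ _ _ (hV x)
  · exact hG'.inr_mem_infectStep t (hV u) (Or.inl rfl)

end Subdivision

theorem targetSet_subdivide_general {V : Type*} [Fintype V] [DecidableEq V]
    (G : SimpleGraph V) (G' : SimpleGraph (V ⊕ Unit)) (t : V → ℕ) (u w : V)
    (h1 : ∀ a b : V, G'.Adj (Sum.inl a) (Sum.inl b) ↔ (G.Adj a b ∧ s(a, b) ≠ s(u, w)))
    (h2 : ∀ a : V, G'.Adj (Sum.inl a) (Sum.inr ()) ↔ (a = u ∨ a = w))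
    (S : Finset V) (hS : IsTargetSet G t S) :
    IsTargetSet G' (Sum.elim t fun _ => 1) (S.image Sum.inl) :=
  IsSubdivision.isTargetSet ⟨h1, h2⟩ hS

/-- Subdividing an edge once (new vertex with threshold 1) preserves target sets. -/
theorem targetSet_subdivide {V : Type*} [Fintype V] [DecidableEq V]
    (G : SimpleGraph V) (G' : SimpleGraph (V ⊕ Unit)) (t : V → ℕ) (u w : V)
    (huw : G.Adj u w)
    (h1 : ∀ a b : V, G'.Adj (Sum.inl a) (Sum.inl b) ↔ (G.Adj a b ∧ s(a, b) ≠ s(u, w)))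
    (h2 : ∀ a : V, G'.Adj (Sum.inl a) (Sum.inr ()) ↔ (a = u ∨ a = w))
    (S : Finset V) (hS : IsTargetSet G t S) :
    IsTargetSet G' (Sum.elim t fun _ => 1) (S.image Sum.inl) :=
  targetSet_subdivide_general G G' t u w h1 h2 S hS
end

section
/- H has an independent set of size at least k if and only if G, obtained from H by subdividing one edge {u,v} exactly 6q times, has an independent set of size at least k + 3q. -/
open scoped Classical
open Finset

/-!
An independent set of `H` contains at most one of `u, w`, so it extends by the `3q` path
vertices at even positions (if `w` is present) or at odd positions (otherwise), which avoid
the path neighbour of the endpoint present. Conversely, an independent set of `G` meets the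
path, which has no two consecutive vertices in it, in at most `3q` vertices, and in at most
`3q - 1` if it contains both `u` and `w`, since then the two end vertices of the path are
excluded; in that case dropping `w` restores independence in `H`.
-/

namespace SimpleGraph

variable {α : Type*} {G : SimpleGraph α}

theorem isIndepSet_coe_iff {s : Finset α} :
    G.IsIndepSet ↑s ↔ ∀ a ∈ s, ∀ b ∈ s, ¬G.Adj a b :=
  ⟨fun h _ ha _ hb hab => h ha hb hab.ne hab, fun h _ ha _ hb _ => h _ ha _ hb⟩

theorem IsIndepSet.of_deleteEdges {u w : α} {s : Set α}
    (hs : (G.deleteEdges {s(u, w)}).IsIndepSet s) (huw : ¬(u ∈ s ∧ w ∈ s)) :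
    G.IsIndepSet s := by
  intro a ha b hb hab hadj
  refine hs ha hb hab ((deleteEdges_adj ..).2 ⟨hadj, fun h => ?_⟩)
  rcases Sym2.eq_iff.1 (Set.mem_singleton_iff.1 h) with ⟨rfl, rfl⟩ | ⟨rfl, rfl⟩
  exacts [huw ⟨ha, hb⟩, huw ⟨hb, ha⟩]

theorem card_le_of_isIndepSet_pathGraph {n a m : ℕ} {s : Finset (Fin n)}
    (hs : (pathGraph n).IsIndepSet ↑s) (hsa : ∀ i ∈ s, a ≤ (i : ℕ) ∧ (i : ℕ) < a + 2 * m) :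
    #s ≤ m := by
  -- no two elements of `s` are consecutive, so `i ↦ (i - a) / 2` is injective on `s`
  have hmaps : Set.MapsTo (fun i : Fin n => ((i : ℕ) - a) / 2) s (range m) := by
    intro i hi
    have := hsa i hi
    simp only [coe_range, Set.mem_Iio]
    omega
  calc #s ≤ #(range m) := card_le_card_of_injOn _ hmaps fun i hi j hj hij => by
        by_contra hne
        have := hsa i hi
        have := hsa j hj
        have := hs hi hj hne
        simp only [pathGraph_adj] at this hij
        omega
    _ = m := card_range m

theorem isIndepSet_pathGraph_filter_val_mod_two (n c : ℕ) :
    (pathGraph n).IsIndepSet ↑({i | (i : ℕ) % 2 = c} : Finset (Fin n)) := by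
  intro i hi j hj _ hadj
  simp only [coe_filter, mem_univ, true_and, Set.mem_ofPred_eq] at hi hj
  rw [pathGraph_adj] at hadj
  omega

theorem card_filter_val_mod_two {n m c : ℕ} (hn : n = 2 * m) (hc : c < 2) :
    #({i | (i : ℕ) % 2 = c} : Finset (Fin n)) = m := by
  subst hn
  refine (card_nbij' (t := univ) (fun i : Fin (2 * m) => (⟨i / 2, by omega⟩ : Fin m))
    (fun j : Fin m => (⟨2 * j + c, by omega⟩ : Fin (2 * m))) (fun _ _ => mem_univ _)
    (fun j _ => ?_) (fun i hi => ?_) (fun j _ => ?_)).trans (card_fin m)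
  · simp only [coe_filter, mem_univ, true_and, Set.mem_ofPred_eq]
    omega
  · simp only [coe_filter, mem_univ, true_and, Set.mem_ofPred_eq] at hi
    ext
    dsimp only
    omega
  · ext
    dsimp only
    omega

section Subdivision

variable {V : Type*} {H : SimpleGraph V} {u w : V} {n : ℕ} {G : SimpleGraph (V ⊕ Fin n)}
  (hin : ∀ a b : V, G.Adj (.inl a) (.inl b) ↔ (H.deleteEdges {s(u, w)}).Adj a b)
  (hend : ∀ (a : V) (i : Fin n), G.Adj (.inl a) (.inr i) ↔
    (a = u ∧ (i : ℕ) = 0) ∨ (a = w ∧ (i : ℕ) = n - 1))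
  (hpath : ∀ i j : Fin n, G.Adj (.inr i) (.inr j) ↔ (pathGraph n).Adj i j)
include hin hend hpath

theorem isIndepSet_disjSum_iff {A : Finset V} {B : Finset (Fin n)} :
    G.IsIndepSet ↑(A.disjSum B) ↔
      (H.deleteEdges {s(u, w)}).IsIndepSet ↑A ∧ (pathGraph n).IsIndepSet ↑B ∧
        (u ∈ A → ∀ i ∈ B, (i : ℕ) ≠ 0) ∧ (w ∈ A → ∀ i ∈ B, (i : ℕ) ≠ n - 1) := by
  have hcomm (i : Fin n) (a : V) := G.adj_comm (.inr i) (.inl a)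
  simp only [isIndepSet_coe_iff, Sum.forall, inl_mem_disjSum, inr_mem_disjSum, hcomm, hin,
    hend, hpath, imp_and, forall_and]
  have hswap : (∀ i ∈ B, ∀ a ∈ A, ¬((a = u ∧ (i : ℕ) = 0) ∨ (a = w ∧ (i : ℕ) = n - 1))) ↔
      (∀ a ∈ A, ∀ i ∈ B, ¬((a = u ∧ (i : ℕ) = 0) ∨ (a = w ∧ (i : ℕ) = n - 1))) :=
    ⟨fun h a ha i hi => h i hi a ha, fun h i hi a ha => h a ha i hi⟩
  have hcross : (∀ a ∈ A, ∀ i ∈ B, ¬((a = u ∧ (i : ℕ) = 0) ∨ (a = w ∧ (i : ℕ) = n - 1))) ↔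
      (u ∈ A → ∀ i ∈ B, (i : ℕ) ≠ 0) ∧ (w ∈ A → ∀ i ∈ B, (i : ℕ) ≠ n - 1) := by
    refine ⟨fun h => ⟨fun hu i hi h0 => h u hu i hi (.inl ⟨rfl, h0⟩),
      fun hw i hi h1 => h w hw i hi (.inr ⟨rfl, h1⟩)⟩, ?_⟩
    rintro ⟨hu, hw⟩ a ha i hi (⟨rfl, h0⟩ | ⟨rfl, h1⟩)
    exacts [hu ha i hi h0, hw ha i hi h1]
  rw [hswap, hcross]
  tauto

theorem exists_isIndepSet_card_eq_add {m : ℕ} (hn : n = 2 * m) (huw : H.Adj u w)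
    {I : Finset V} (hI : H.IsIndepSet ↑I) :
    ∃ I' : Finset (V ⊕ Fin n), G.IsIndepSet ↑I' ∧ #I' = #I + m := by
  set c := if w ∈ I then 0 else 1 with hc
  have hc2 : c < 2 := by
    rw [hc]
    split_ifs <;> omega
  have hu : u ∈ I → c = 1 := fun hu => if_neg fun hw => hI hu hw huw.ne huw
  have hw : w ∈ I → c = 0 := fun hw => if_pos hw
  refine ⟨I.disjSum {i | (i : ℕ) % 2 = c}, (isIndepSet_disjSum_iff hin hend hpath).2
    ⟨?_, isIndepSet_pathGraph_filter_val_mod_two n c, fun hu' i hi => ?_, fun hw' i hi => ?_⟩,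
    by rw [card_disjSum, card_filter_val_mod_two hn hc2]⟩
  · exact hI.mono' fun _ _ h hadj => h (deleteEdges_le _ hadj)
  · have := hu hu'
    simp only [mem_filter, mem_univ, true_and] at hi
    omega
  · have := hw hw'
    simp only [mem_filter, mem_univ, true_and] at hi
    omega

theorem exists_isIndepSet_card_le_add {m : ℕ} (hn : n = 2 * m) (hm : 1 ≤ m)
    {I' : Finset (V ⊕ Fin n)} (hI' : G.IsIndepSet ↑I') :
    ∃ I : Finset V, H.IsIndepSet ↑I ∧ #I' ≤ #I + m := by
  rw [← toLeft_disjSum_toRight (u := I'), isIndepSet_disjSum_iff hin hend hpath] at hI'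
  obtain ⟨hA, hB, hu, hw⟩ := hI'
  rw [← card_toLeft_add_card_toRight]
  by_cases hboth : u ∈ I'.toLeft ∧ w ∈ I'.toLeft
  · have hBcard : #I'.toRight ≤ m - 1 :=
      card_le_of_isIndepSet_pathGraph (a := 1) hB fun i hi => by
        have := hu hboth.1 i hi
        have := hw hboth.2 i hi
        omega
    have hAw : (H.deleteEdges {s(u, w)}).IsIndepSet ↑(I'.toLeft.erase w) :=
      Set.Pairwise.mono (coe_subset.2 (erase_subset _ _)) hA
    refine ⟨_, hAw.of_deleteEdges fun h => (notMem_erase w _) h.2, ?_⟩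
    have := pred_card_le_card_erase (s := I'.toLeft) (a := w)
    omega
  · have hBcard : #I'.toRight ≤ m :=
      card_le_of_isIndepSet_pathGraph (a := 0) hB fun i _ => by
        have := i.isLt
        omega
    exact ⟨_, hA.of_deleteEdges hboth, by omega⟩

end Subdivision

end SimpleGraph

open SimpleGraph in
theorem indep_iff_subdivide_general {V : Type*} (q k : ℕ)
    (H : SimpleGraph V) (G : SimpleGraph (V ⊕ Fin (6 * q)))
    (u w : V) (huw : H.Adj u w) (hq : 1 ≤ q)
    (hin : ∀ a b : V, G.Adj (Sum.inl a) (Sum.inl b) ↔ (H.Adj a b ∧ s(a, b) ≠ s(u, w)))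
    (hend : ∀ (a : V) (i : Fin (6 * q)), G.Adj (Sum.inl a) (Sum.inr i) ↔
      ((a = u ∧ (i : ℕ) = 0) ∨ (a = w ∧ (i : ℕ) = 6 * q - 1)))
    (hpath : ∀ i j : Fin (6 * q), G.Adj (Sum.inr i) (Sum.inr j) ↔
      ((i : ℕ) + 1 = (j : ℕ) ∨ (j : ℕ) + 1 = (i : ℕ))) :
    (∃ I : Finset V, k ≤ I.card ∧ ∀ a ∈ I, ∀ b ∈ I, ¬ H.Adj a b) ↔
      (∃ I' : Finset (V ⊕ Fin (6 * q)), k + 3 * q ≤ I'.card ∧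
        ∀ a ∈ I', ∀ b ∈ I', ¬ G.Adj a b) := by
  have hin' (a b : V) : G.Adj (.inl a) (.inl b) ↔ (H.deleteEdges {s(u, w)}).Adj a b := by
    rw [hin, deleteEdges_adj, Set.mem_singleton_iff]
  have hpath' (i j : Fin (6 * q)) : G.Adj (.inr i) (.inr j) ↔ (pathGraph _).Adj i j :=
    (hpath i j).trans pathGraph_adj.symm
  have hn : 6 * q = 2 * (3 * q) := by ring
  simp only [← isIndepSet_coe_iff]
  constructor
  · rintro ⟨I, hk, hI⟩
    obtain ⟨I', hI', hcard⟩ := exists_isIndepSet_card_eq_add hin' hend hpath' hn huw hI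
    exact ⟨I', by omega, hI'⟩
  · rintro ⟨I', hk, hI'⟩
    obtain ⟨I, hI, hcard⟩ := exists_isIndepSet_card_le_add hin' hend hpath' hn (by omega) hI'
    exact ⟨I, by omega, hI⟩

/-- H has an independent set of size ≥ k iff the graph obtained by subdividing
one edge 6q times has an independent set of size ≥ k + 3q. -/
theorem indep_iff_subdivide {V : Type*} [Fintype V] [DecidableEq V] (q k : ℕ)
    (H : SimpleGraph V) (G : SimpleGraph (V ⊕ Fin (6 * q)))
    (u w : V) (huw : H.Adj u w) (hq : 1 ≤ q)
    (hin : ∀ a b : V, G.Adj (Sum.inl a) (Sum.inl b) ↔ (H.Adj a b ∧ s(a, b) ≠ s(u, w)))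
    (hend : ∀ (a : V) (i : Fin (6 * q)), G.Adj (Sum.inl a) (Sum.inr i) ↔
      ((a = u ∧ (i : ℕ) = 0) ∨ (a = w ∧ (i : ℕ) = 6 * q - 1)))
    (hpath : ∀ i j : Fin (6 * q), G.Adj (Sum.inr i) (Sum.inr j) ↔
      ((i : ℕ) + 1 = (j : ℕ) ∨ (j : ℕ) + 1 = (i : ℕ))) :
    (∃ I : Finset V, k ≤ I.card ∧ ∀ a ∈ I, ∀ b ∈ I, ¬ H.Adj a b) ↔
      (∃ I' : Finset (V ⊕ Fin (6 * q)), k + 3 * q ≤ I'.card ∧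
        ∀ a ∈ I', ∀ b ∈ I', ¬ G.Adj a b) :=
  indep_iff_subdivide_general q k H G u w huw hq hin hend hpath
end

section
/- Leaf-attachment correctness: Let G' be obtained from G by attaching p new leaf vertices, each with threshold 1, to a vertex v, keeping all original thresholds. Then G has a target set of size at most k (w.r.t. t) if and only if G' has a target set of size at most k (w.r.t. the extended threshold function). -/
open scoped Classical
open Finset

/-!
A leaf of threshold `1` is activated exactly one round after its centre `v`, so it never helps
to start with a leaf rather than with `v`. Both directions are simulations of the activation
process: `Sum.inl` carries a run in `G` to a run in `G'` (one extra round activates the leaves),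
and collapsing every leaf onto `v` carries a run in `G'` to a run in `G`, round by round.
-/

section Simulation

variable {V W : Type*} [Fintype V] [Fintype W]

lemma mem_infectStep_s17 {G : SimpleGraph V} {t : V → ℕ} {S : Finset V} {x : V} :
    x ∈ infectStep G t S ↔ x ∈ S ∨ t x ≤ (G.neighborFinset x ∩ S).card := by
  simp [infectStep]

lemma infectStep_mono_s17 (G : SimpleGraph V) (t : V → ℕ) {S T : Finset V} (h : S ⊆ T) :
    infectStep G t S ⊆ infectStep G t T := by
  intro x
  simp only [mem_infectStep_s17]
  exact Or.imp (@h x) fun hx => hx.trans (card_le_card (inter_subset_inter_left h))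

lemma infect_subset_infect_succ (G : SimpleGraph V) (t : V → ℕ) (S : Finset V) (n : ℕ) :
    infect G t S n ⊆ infect G t S (n + 1) :=
  subset_union_left

lemma image_infect_subset (H : SimpleGraph W) (s : W → ℕ) (G : SimpleGraph V) (t : V → ℕ)
    (f : W → V) (hf : ∀ X, (infectStep H s X).image f ⊆ infectStep G t (X.image f))
    (S : Finset W) : ∀ n, (infect H s S n).image f ⊆ infect G t (S.image f) n
  | 0 => subset_rfl
  | n + 1 => (hf _).trans (infectStep_mono_s17 G t (image_infect_subset H s G t f hf S n))

end Simulation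

section LeafAttachment

-- `infectStep` decides equality classically; the derived instance on `V ⊕ Fin p` would not
-- be defeq to it.
attribute [-instance] instDecidableEqSum

variable {V : Type*} [Fintype V] {p : ℕ} {G : SimpleGraph V} {G' : SimpleGraph (V ⊕ Fin p)}
  {t : V → ℕ} {v : V}

def collapseLeaves (v : V) : V ⊕ Fin p → V :=
  Sum.elim id fun _ => v

lemma image_inl_infectStep_subset (h1 : ∀ a b : V, G'.Adj (.inl a) (.inl b) ↔ G.Adj a b)
    (X : Finset V) :
    (infectStep G t X).image Sum.inl ⊆
      infectStep G' (Sum.elim t fun _ => 1) (X.image Sum.inl) := by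
  intro y hy
  obtain ⟨a, ha, rfl⟩ := mem_image.mp hy
  rw [mem_infectStep_s17] at ha ⊢
  refine Or.imp (mem_image_of_mem _) (fun ha => ha.trans ?_) ha
  refine card_le_card_of_injOn Sum.inl (fun b hb => ?_) Sum.inl_injective.injOn
  simp only [coe_inter, Set.mem_inter_iff, mem_coe, SimpleGraph.mem_neighborFinset] at hb ⊢
  exact ⟨(h1 a b).mpr hb.1, mem_image_of_mem _ hb.2⟩

lemma inr_mem_infectStep (h2 : ∀ (a : V) (i : Fin p), G'.Adj (.inl a) (.inr i) ↔ a = v)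
    {X : Finset (V ⊕ Fin p)} (hv : .inl v ∈ X) (i : Fin p) :
    .inr i ∈ infectStep G' (Sum.elim t fun _ => 1) X := by
  refine mem_infectStep_s17.mpr (Or.inr (one_le_card.mpr ⟨.inl v, ?_⟩))
  simpa [SimpleGraph.mem_neighborFinset, SimpleGraph.adj_comm] using ⟨(h2 v i).mpr rfl, hv⟩

/-- Unless `a = v` and some leaf is already active, the active neighbours of `inl a` in `G'`
are all original vertices, and collapsing them is injective. -/
lemma card_neighborFinset_inl_inter_le (h1 : ∀ a b : V, G'.Adj (.inl a) (.inl b) ↔ G.Adj a b)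
    (h2 : ∀ (a : V) (i : Fin p), G'.Adj (.inl a) (.inr i) ↔ a = v) {a : V}
    {X : Finset (V ⊕ Fin p)} (hX : a = v → ∀ i, .inr i ∉ X) :
    (G'.neighborFinset (.inl a) ∩ X).card ≤
      (G.neighborFinset a ∩ X.image (collapseLeaves v)).card := by
  have hinl : ∀ x ∈ G'.neighborFinset (.inl a) ∩ X,
      ∃ b, x = .inl b ∧ G.Adj a b ∧ b ∈ X.image (collapseLeaves v) := by
    rintro (b | i) hx <;> rw [mem_inter, SimpleGraph.mem_neighborFinset] at hx
    · exact ⟨b, rfl, (h1 a b).mp hx.1, mem_image_of_mem _ hx.2⟩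
    · exact absurd hx.2 (hX ((h2 a i).mp hx.1) i)
  refine card_le_card_of_injOn (collapseLeaves v) (fun x hx => ?_) (fun x hx y hy hxy => ?_)
  · obtain ⟨b, rfl, hab, hb⟩ := hinl x hx
    exact mem_inter.mpr ⟨(G.mem_neighborFinset a b).mpr hab, hb⟩
  · obtain ⟨b, rfl, -⟩ := hinl x hx
    obtain ⟨c, rfl, -⟩ := hinl y hy
    exact congrArg Sum.inl hxy

lemma image_collapseLeaves_infectStep_subset
    (h1 : ∀ a b : V, G'.Adj (.inl a) (.inl b) ↔ G.Adj a b)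
    (h2 : ∀ (a : V) (i : Fin p), G'.Adj (.inl a) (.inr i) ↔ a = v)
    (h3 : ∀ i j : Fin p, ¬ G'.Adj (.inr i) (.inr j)) (X : Finset (V ⊕ Fin p)) :
    (infectStep G' (Sum.elim t fun _ => 1) X).image (collapseLeaves v) ⊆
      infectStep G t (X.image (collapseLeaves v)) := by
  intro y hy
  obtain ⟨x, hx, rfl⟩ := mem_image.mp hy
  rw [mem_infectStep_s17] at hx ⊢
  rcases hx with hx | hx
  · exact .inl (mem_image_of_mem _ hx)
  rcases x with a | i
  · by_cases hleaf : a = v ∧ ∃ i, .inr i ∈ X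
    · obtain ⟨rfl, i, hi⟩ := hleaf
      exact .inl (mem_image.mpr ⟨_, hi, rfl⟩)
    · exact .inr <| hx.trans <|
        card_neighborFinset_inl_inter_le h1 h2 fun hav i hi => hleaf ⟨hav, i, hi⟩
  · -- an active leaf has an active neighbour, which can only be `v`
    obtain ⟨x, hx⟩ := one_le_card.mp hx
    rw [mem_inter, SimpleGraph.mem_neighborFinset] at hx
    rcases x with b | j
    · obtain rfl := (h2 b i).mp hx.1.symm
      exact .inl (mem_image.mpr ⟨_, hx.2, rfl⟩)
    · exact absurd hx.1 (h3 i j)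

theorem IsTargetSet.map_inl (h1 : ∀ a b : V, G'.Adj (.inl a) (.inl b) ↔ G.Adj a b)
    (h2 : ∀ (a : V) (i : Fin p), G'.Adj (.inl a) (.inr i) ↔ a = v) {S : Finset V}
    (hS : IsTargetSet G t S) :
    IsTargetSet G' (Sum.elim t fun _ => 1) (S.map .inl) := by
  obtain ⟨n, hn⟩ := hS
  have hinl (a : V) : .inl a ∈ infect G' (Sum.elim t fun _ => 1) (S.map .inl) n := by
    rw [map_eq_image]
    exact image_infect_subset G t G' _ Sum.inl (image_inl_infectStep_subset h1) S n
      (mem_image_of_mem _ (hn ▸ mem_univ a))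
  refine ⟨n + 1, eq_univ_of_forall ?_⟩
  rintro (a | i)
  · exact infect_subset_infect_succ _ _ _ n (hinl a)
  · exact inr_mem_infectStep h2 (hinl v) i

theorem IsTargetSet.image_collapseLeaves
    (h1 : ∀ a b : V, G'.Adj (.inl a) (.inl b) ↔ G.Adj a b)
    (h2 : ∀ (a : V) (i : Fin p), G'.Adj (.inl a) (.inr i) ↔ a = v)
    (h3 : ∀ i j : Fin p, ¬ G'.Adj (.inr i) (.inr j)) {S' : Finset (V ⊕ Fin p)}
    (hS' : IsTargetSet G' (Sum.elim t fun _ => 1) S') :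
    IsTargetSet G t (S'.image (collapseLeaves v)) := by
  obtain ⟨n, hn⟩ := hS'
  refine ⟨n, eq_univ_of_forall fun a => ?_⟩
  exact image_infect_subset G' _ G t _ (image_collapseLeaves_infectStep_subset h1 h2 h3) S' n
    (mem_image_of_mem (collapseLeaves v) (hn ▸ mem_univ (Sum.inl a)))

end LeafAttachment

theorem leaf_attachment_correct_general {V : Type*} [Fintype V]
    (G : SimpleGraph V) (p : ℕ) (G' : SimpleGraph (V ⊕ Fin p))
    (t : V → ℕ) (v : V) (k : ℕ)
    (h1 : ∀ a b : V, G'.Adj (Sum.inl a) (Sum.inl b) ↔ G.Adj a b)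
    (h2 : ∀ (a : V) (i : Fin p), G'.Adj (Sum.inl a) (Sum.inr i) ↔ a = v)
    (h3 : ∀ i j : Fin p, ¬ G'.Adj (Sum.inr i) (Sum.inr j)) :
    (∃ S : Finset V, S.card ≤ k ∧ IsTargetSet G t S) ↔
      (∃ S' : Finset (V ⊕ Fin p), S'.card ≤ k ∧
        IsTargetSet G' (Sum.elim t fun _ => 1) S') := by
  constructor
  · rintro ⟨S, hk, hS⟩
    exact ⟨S.map .inl, (card_map _).trans_le hk, hS.map_inl h1 h2⟩
  · rintro ⟨S', hk, hS'⟩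
    exact ⟨_, card_image_le.trans hk, hS'.image_collapseLeaves h1 h2 h3⟩

/-- Leaf-attachment correctness: attaching p leaves of threshold 1 to a vertex v
does not change the existence of a target set of size at most k. -/
theorem leaf_attachment_correct {V : Type*} [Fintype V] [DecidableEq V]
    (G : SimpleGraph V) (p : ℕ) (hp : 1 ≤ p) (G' : SimpleGraph (V ⊕ Fin p))
    (t : V → ℕ) (v : V) (k : ℕ)
    (h1 : ∀ a b : V, G'.Adj (Sum.inl a) (Sum.inl b) ↔ G.Adj a b)
    (h2 : ∀ (a : V) (i : Fin p), G'.Adj (Sum.inl a) (Sum.inr i) ↔ a = v)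
    (h3 : ∀ i j : Fin p, ¬ G'.Adj (Sum.inr i) (Sum.inr j)) :
    (∃ S : Finset V, S.card ≤ k ∧ IsTargetSet G t S) ↔
      (∃ S' : Finset (V ⊕ Fin p), S'.card ≤ k ∧
        IsTargetSet G' (Sum.elim t fun _ => 1) S') :=
  leaf_attachment_correct_general G p G' t v k h1 h2 h3
end
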